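/- arXiv:2412.10171 — 3 statements merged into one kernel-verified Lean document; each statement's English description precedes it below -/
import Mathlib

section
/- Let ω(λ) = λ·cot(λπ) for λ = λ₁ + iλ₂ ∈ ℂ. For every compact interval [a,b] ⊂ ℝ there exist constants M > 0 and C > 0 such that for all λ with λ₁ ∈ [a,b] and |λ₂| ≥ M: Re ω(λ) > 0, the principal argument of ω(λ) satisfies arg ω(λ) = arctan[(λ₂ sin(2πλ₁) − λ₁ sinh(2πλ₂))/(λ₁ sin(2πλ₁) + λ₂ sinh(2πλ₂))], and |arg ω(λ)| ≤ C/|λ₂|. -/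
/-!
Writing `z = x + iy`, one has `cot z = (sin 2x - i sinh 2y) / (cosh 2y - cos 2x)`, so `ω(λ)` is a
positive multiple of `(λ₁ + iλ₂)(sin 2πλ₁ - i sinh 2πλ₂)`. Its real part
`λ₁ sin 2πλ₁ + λ₂ sinh 2πλ₂` is dominated by `λ₂ sinh 2πλ₂ ≥ 2πλ₂²`, while its imaginary part is
`O(|λ₂| + sinh 2π|λ₂|)`. Hence `arg ω(λ)` is the arctangent of their quotient, which is
`O(1/|λ₂|)`, and `|arctan t| ≤ |t|`.
-/

open Complex Filter Real

/-- `ω(λ) = λ·cot(λπ)`. -/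
noncomputable def omegaFun (l : ℂ) : ℂ := l * Complex.cot (l * (π : ℂ))

namespace Real

lemma arctan_le_self {t : ℝ} (ht : 0 ≤ t) : arctan t ≤ t := by
  simpa only [tan_arctan] using le_tan (arctan_nonneg.2 ht) (arctan_lt_pi_div_two t)

lemma abs_arctan_le_abs (t : ℝ) : |arctan t| ≤ |t| := by
  rcases le_total 0 t with ht | ht
  · rw [abs_of_nonneg ht, abs_of_nonneg (arctan_nonneg.2 ht)]
    exact arctan_le_self ht
  · rw [abs_of_nonpos ht, abs_of_nonpos (arctan_le_zero.2 ht), ← arctan_neg]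
    exact arctan_le_self (neg_nonneg.2 ht)

lemma mul_sq_le_mul_sinh {c : ℝ} (hc : 0 ≤ c) (t : ℝ) : c * t ^ 2 ≤ t * sinh (c * t) := by
  rcases le_total 0 t with ht | ht
  · nlinarith [self_le_sinh_iff.2 (mul_nonneg hc ht)]
  · nlinarith [sinh_le_self_iff.2 (mul_nonpos_of_nonneg_of_nonpos hc ht)]

lemma cosh_sub_cos_pos {u : ℝ} (hu : u ≠ 0) (v : ℝ) : 0 < cosh u - cos v := by
  linarith [one_lt_cosh.2 hu, cos_le_one v]

end Real

namespace Complex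

open ComplexConjugate

lemma arg_eq_arctan_of_re_pos {z : ℂ} (hz : 0 < z.re) : arg z = Real.arctan (z.im / z.re) := by
  have hlt := abs_lt.1 (abs_arg_lt_pi_div_two_iff.2 (Or.inl hz))
  rw [← tan_arg, Real.arctan_tan hlt.1 hlt.2]

lemma cos_mul_conj_sin (z : ℂ) :
    cos z * conj (sin z) = (Real.sin (2 * z.re) - Real.sinh (2 * z.im) * I) / 2 := by
  have h := sin_add z (conj z)
  have h' := sin_sub z (conj z)
  rw [add_conj, sub_conj, sin_mul_I] at *
  rw [← sin_conj]
  push_cast at *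
  linear_combination (h' - h) / 2

lemma sin_mul_conj_sin (z : ℂ) :
    sin z * conj (sin z) = (Real.cosh (2 * z.im) - Real.cos (2 * z.re)) / 2 := by
  have h := cos_add z (conj z)
  have h' := cos_sub z (conj z)
  rw [add_conj, sub_conj, cos_mul_I] at *
  rw [← sin_conj]
  push_cast at *
  linear_combination (h - h') / 2

-- No hypothesis on `sin z`: where it vanishes, so does the denominator `2 |sin z|²`.
lemma cot_eq_div (z : ℂ) :
    cot z = (Real.sin (2 * z.re) - Real.sinh (2 * z.im) * I) /
      (Real.cosh (2 * z.im) - Real.cos (2 * z.re)) := by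
  rw [show (Real.sin (2 * z.re) - Real.sinh (2 * z.im) * I : ℂ) = 2 * (cos z * conj (sin z)) by
      rw [cos_mul_conj_sin]; ring,
    show (Real.cosh (2 * z.im) - Real.cos (2 * z.re) : ℂ) = 2 * (sin z * conj (sin z)) by
      rw [sin_mul_conj_sin]; ring,
    mul_div_mul_left _ _ two_ne_zero, cot_eq_cos_div_sin]
  rcases eq_or_ne (sin z) 0 with hz | hz
  · simp [hz]
  · rw [mul_div_mul_right _ _ ((map_ne_zero conj).2 hz)]

end Complex

lemma omegaFun_eq (l : ℂ) : omegaFun l =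
    ⟨l.re * Real.sin (2 * π * l.re) + l.im * Real.sinh (2 * π * l.im),
      l.im * Real.sin (2 * π * l.re) - l.re * Real.sinh (2 * π * l.im)⟩ *
      ((Real.cosh (2 * π * l.im) - Real.cos (2 * π * l.re))⁻¹ : ℝ) := by
  rw [omegaFun, cot_eq_div, mk_eq_add_mul_I, re_mul_ofReal, im_mul_ofReal, mul_comm l.re,
    mul_comm l.im, ← mul_assoc, ← mul_assoc]
  nth_rw 1 [← re_add_im l]
  push_cast
  ring_nf
  rw [I_sq]
  ring

lemma re_pos_and_abs_im_div_re_le {K x y σ τ : ℝ} (hx : |x| ≤ K) (hy : K + 1 ≤ |y|)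
    (hσ : |σ| ≤ 1) (hτ : 6 * y ^ 2 ≤ y * τ) :
    0 < x * σ + y * τ ∧ |(y * σ - x * τ) / (x * σ + y * τ)| ≤ (2 * K + 1) / |y| := by
  have hK : 0 ≤ K := (abs_nonneg x).trans hx
  have hy0 : 0 < |y| := by linarith
  have hy2 : (K + 1) ^ 2 ≤ y ^ 2 := by rw [← sq_abs y]; gcongr
  have hyτ : |y| * |τ| = y * τ := by rw [← abs_mul, abs_of_nonneg (by nlinarith)]
  have hxσ : |x * σ| ≤ K := by
    rw [abs_mul]; nlinarith [abs_nonneg x, abs_nonneg σ]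
  have hre : y * τ - K ≤ x * σ + y * τ := by linarith [(abs_le.1 hxσ).1]
  have hre_pos : 0 < x * σ + y * τ := by nlinarith
  have him : |y * σ - x * τ| ≤ |y| + K * |τ| := by
    calc |y * σ - x * τ| ≤ |y| * |σ| + |x| * |τ| := by
          rw [← abs_mul, ← abs_mul]; exact abs_sub _ _
      _ ≤ |y| + K * |τ| := by
          nlinarith [mul_le_mul_of_nonneg_left hσ (abs_nonneg y),
            mul_le_mul_of_nonneg_right hx (abs_nonneg τ)]
  refine ⟨hre_pos, ?_⟩
  rw [abs_div, abs_of_pos hre_pos, div_le_div_iff₀ hre_pos hy0]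
  -- `|im| |y| ≤ y² + K yτ` and `(2K+1) re ≥ (2K+1)(yτ - K)`; the gap closes as `yτ ≥ y² + 5(K+1)²`.
  nlinarith [mul_le_mul_of_nonneg_right him hy0.le, sq_abs y]

theorem stmt7_general (a b : ℝ) :
    ∃ M > (0 : ℝ), ∃ C > (0 : ℝ), ∀ l : ℂ, l.re ∈ Set.Icc a b → M ≤ |l.im| →
      0 < (omegaFun l).re ∧
      Complex.arg (omegaFun l) =
        Real.arctan ((l.im * Real.sin (2 * π * l.re) - l.re * Real.sinh (2 * π * l.im)) /
          (l.re * Real.sin (2 * π * l.re) + l.im * Real.sinh (2 * π * l.im))) ∧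
      |Complex.arg (omegaFun l)| ≤ C / |l.im| := by
  refine ⟨max |a| |b| + 1, by positivity, 2 * max |a| |b| + 1, by positivity, fun l hl hM => ?_⟩
  have hK : 0 ≤ max |a| |b| := le_max_of_le_left (abs_nonneg a)
  have him : l.im ≠ 0 := abs_pos.1 (by linarith)
  have hsinh : 6 * l.im ^ 2 ≤ l.im * Real.sinh (2 * π * l.im) := by
    nlinarith [mul_sq_le_mul_sinh (by positivity : 0 ≤ 2 * π) l.im, pi_gt_three, sq_nonneg l.im]
  obtain ⟨hP, hratio⟩ := re_pos_and_abs_im_div_re_le (σ := Real.sin (2 * π * l.re))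
    (abs_le_max_abs_abs hl.1 hl.2) hM (abs_sin_le_one _) hsinh
  have hD : 0 < Real.cosh (2 * π * l.im) - Real.cos (2 * π * l.re) :=
    cosh_sub_cos_pos (mul_ne_zero (by positivity) him) _
  have harg : arg (omegaFun l) = Real.arctan ((l.im * Real.sin (2 * π * l.re) -
      l.re * Real.sinh (2 * π * l.im)) /
        (l.re * Real.sin (2 * π * l.re) + l.im * Real.sinh (2 * π * l.im))) := by
    rw [omegaFun_eq, arg_mul_real (inv_pos.2 hD), arg_eq_arctan_of_re_pos hP]
  refine ⟨?_, harg, harg ▸ (abs_arctan_le_abs _).trans hratio⟩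
  rw [omegaFun_eq, re_mul_ofReal]
  exact mul_pos hP (inv_pos.2 hD)

/-- for `ω(λ) = λ·cot(λπ)` and every compact interval `[a,b] ⊂ ℝ` there
are constants `M, C > 0` such that for all `λ = λ₁ + iλ₂` with `λ₁ ∈ [a,b]` and
`|λ₂| ≥ M`: `Re ω(λ) > 0`, the principal argument of `ω(λ)` equals
`arctan[(λ₂ sin(2πλ₁) - λ₁ sinh(2πλ₂))/(λ₁ sin(2πλ₁) + λ₂ sinh(2πλ₂))]`, and
`|arg ω(λ)| ≤ C/|λ₂|`. -/
theorem stmt7 (a b : ℝ) (hab : a ≤ b) :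
    ∃ M > (0 : ℝ), ∃ C > (0 : ℝ), ∀ l : ℂ, l.re ∈ Set.Icc a b → M ≤ |l.im| →
      0 < (omegaFun l).re ∧
      Complex.arg (omegaFun l) =
        Real.arctan ((l.im * Real.sin (2 * π * l.re) - l.re * Real.sinh (2 * π * l.im)) /
          (l.re * Real.sin (2 * π * l.re) + l.im * Real.sinh (2 * π * l.im))) ∧
      |Complex.arg (omegaFun l)| ≤ C / |l.im| :=
  stmt7_general a b
end

section
/- Let ϑ ∈ (0,1) and σ ∈ (max{−1/2, −ϑ}, 3/2 − ϑ). There exists M₀ > 0 such that for all M ≥ M₀ there are constants ε ∈ (0, π/2) and C = C(M, σ, ϑ) with |Φ(s,ζ)| ≤ C e^{−(π/2−ε)|η|} e^{−(π/4)|τ|} whenever s = σ + iτ, ζ = ϑ + iη and (η,τ) belongs to Σ₃ ∪ Σ₅ ∪ Σ₉ ∪ Σ₁₁, where Σ₃ = {M−τ < η < −τ/2, τ > 2M}, Σ₅ = {−(3/2)τ < η < −M−τ, τ > 2M}, Σ₉ = {−τ/2 < η < −τ−M, τ < −2M}, Σ₁₁ = {M−τ < η < −(3/2)τ, τ < −2M}.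 -/
/-!
Write `λ = x + it`. Euler's product for `Γ` turns `log ‖K(λ)‖` into a double series whose terms
are second differences of `w ↦ log ‖w + 1/2 + it‖ - log ‖w + it‖`; by the mean value theorem the
term of index `m` is `O(t²/(m²(m²+t²)) + 1/m³)`, and summing gives
`|log ‖K(λ)‖| ≤ A (3 + log (1 + t²))` for `-1/2 < x < 3/2`. So `K(s)/K(s+ζ)` grows at most
polynomially in `τ`, while `‖e^{iπζ} - e^{-iπζ}‖ ≥ e^{π|η|}/2`. In the four sectors
`|τ + η| ≤ |τ|/2 ≤ |η|`, so `e^{-π|η|} ≤ e^{-(π/4)|η|} e^{-(3π/8)|τ|}`, and the spare factor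
`e^{-(π/8)|τ|}` absorbs the polynomial growth: the claim holds with `ε = π/4`.
-/

open Complex Filter Real

/-- The `n`-th factor of the infinite product defining `K`. -/
noncomputable def Kterm (n : ℕ) (l : ℂ) : ℂ :=
  Complex.Gamma ((n : ℂ) - 1/2 + l) * Complex.Gamma ((n : ℂ) + 1 - l) /
    (Complex.Gamma ((n : ℂ) + 1/2 - l) * Complex.Gamma ((n : ℂ) + l)) *
    ((n : ℂ) / ((n : ℂ) - 1/2)) ^ (2 * l - 1)

/-- `K` as the value of the infinite product (convergent on `-1/2 < Re λ < 2`). -/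
noncomputable def Kfun (l : ℂ) : ℂ := ∏' n : ℕ, Kterm (n + 1) l

/-- `Φ(s,ζ) = [K(s)/((s+ζ)K(s+ζ))]·1/(e^{iπζ} - e^{-iπζ})`. -/
noncomputable def Phi (s ζ : ℂ) : ℂ :=
  Kfun s / ((s + ζ) * Kfun (s + ζ)) /
    (Complex.exp (Complex.I * (π : ℂ) * ζ) - Complex.exp (-(Complex.I * (π : ℂ) * ζ)))

open Finset Set Topology

/-- `logRatio t w = log ‖w + 1/2 + t i‖ - log ‖w + t i‖`. -/
noncomputable def logRatio (t w : ℝ) : ℝ :=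
  (Real.log ((w + 1/2) ^ 2 + t ^ 2) - Real.log (w ^ 2 + t ^ 2)) / 2

noncomputable def logRatioDeriv (t w : ℝ) : ℝ :=
  (w + 1/2) / ((w + 1/2) ^ 2 + t ^ 2) - w / (w ^ 2 + t ^ 2)

lemma hasDerivAt_logRatio (t : ℝ) {w : ℝ} (hw : 0 < w) :
    HasDerivAt (logRatio t) (logRatioDeriv t w) w := by
  have h₁ : HasDerivAt (fun w : ℝ => (w + 1/2) ^ 2 + t ^ 2) (2 * (w + 1/2)) w :=
    ((((hasDerivAt_id' w).add_const (1/2)).fun_pow 2).add_const (t ^ 2)).congr_deriv (by norm_num)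
  have h₂ : HasDerivAt (fun w : ℝ => w ^ 2 + t ^ 2) (2 * w) w :=
    (((hasDerivAt_id' w).fun_pow 2).add_const (t ^ 2)).congr_deriv (by norm_num)
  refine (((h₁.log (by positivity)).sub (h₂.log (by positivity))).div_const 2).congr_deriv ?_
  have : 0 < (w + 1/2) ^ 2 + t ^ 2 := by positivity
  have : 0 < w ^ 2 + t ^ 2 := by positivity
  unfold logRatioDeriv
  field_simp

lemma logRatio_zero {w : ℝ} (hw : 0 < w) : logRatio 0 w = Real.log ((w + 1/2) / w) := by
  simp only [logRatio, ne_eq, OfNat.ofNat_ne_zero, not_false_eq_true, zero_pow, add_zero,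
    Real.log_pow, Real.log_div (by positivity : w + 1/2 ≠ 0) hw.ne']
  ring

lemma tendsto_logRatio_zero_atTop : Tendsto (logRatio 0) atTop (𝓝 0) := by
  have h : Tendsto (fun w : ℝ => Real.log (1 + (2 * w)⁻¹)) atTop (𝓝 0) := by
    simpa using ((tendsto_inv_atTop_zero.comp
      (tendsto_id.const_mul_atTop two_pos)).const_add 1).log (by norm_num)
  refine h.congr' ?_
  filter_upwards [eventually_gt_atTop 0] with w hw
  rw [logRatio_zero hw]
  congr 1
  field_simp

lemma abs_logRatioDeriv_sub_le (t : ℝ) {L ξ ζ : ℝ} (hL : 0 < L) (hξ : ξ ∈ Icc L (L + 2))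
    (hζ : ζ ∈ Icc L (L + 2)) :
    |logRatioDeriv t ξ - logRatioDeriv 0 ζ|
      ≤ 2 * t ^ 2 / (L ^ 2 * (L ^ 2 + t ^ 2)) + (2 * L + 5) / L ^ 4 := by
  obtain ⟨hξ₁, hξ₂⟩ := hξ
  obtain ⟨hζ₁, hζ₂⟩ := hζ
  have hξ0 : 0 < ξ := hL.trans_le hξ₁
  have hζ0 : 0 < ζ := hL.trans_le hζ₁
  -- `logRatioDeriv 0 w = -1 / (2w(w + 1/2))`: split off the `t`-dependent part at `ξ`.
  have split : logRatioDeriv t ξ - logRatioDeriv 0 ζ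
      = (t ^ 2 / (ξ * (ξ ^ 2 + t ^ 2)) - t ^ 2 / ((ξ + 1/2) * ((ξ + 1/2) ^ 2 + t ^ 2)))
        + (ξ - ζ) * (ξ + ζ + 1/2) / (2 * (ξ * (ξ + 1/2) * (ζ * (ζ + 1/2)))) := by
    have : 0 < ξ ^ 2 + t ^ 2 := by positivity
    have : 0 < (ξ + 1/2) ^ 2 + t ^ 2 := by positivity
    have : 0 < ζ + 1/2 := by linarith
    unfold logRatioDeriv
    field_simp
    ring
  rw [split]
  refine (abs_add_le _ _).trans (add_le_add ?_ ?_)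
  · have hle : t ^ 2 / ((ξ + 1/2) * ((ξ + 1/2) ^ 2 + t ^ 2)) ≤ t ^ 2 / (ξ * (ξ ^ 2 + t ^ 2)) := by
      gcongr <;> nlinarith
    rw [abs_of_nonneg (sub_nonneg.2 hle)]
    calc _ ≤ 2 * t ^ 2 / (ξ ^ 2 * (ξ ^ 2 + t ^ 2)) := by
          rw [div_sub_div _ _ (by positivity) (by positivity),
            div_le_div_iff₀ (by positivity) (by positivity)]
          have : ((3/2) * ξ ^ 2 + (3/4) * ξ + 1/8 + t ^ 2 / 2) * ξ
              ≤ 2 * ((ξ + 1/2) * ((ξ + 1/2) ^ 2 + t ^ 2)) := by nlinarith [sq_nonneg ξ, sq_nonneg t]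
          nlinarith [mul_le_mul_of_nonneg_left this
            (by positivity : 0 ≤ t ^ 2 * (ξ ^ 2 + t ^ 2) * ξ)]
      _ ≤ _ := by gcongr
  · rw [abs_div, abs_of_pos (by positivity : 0 < 2 * (ξ * (ξ + 1/2) * (ζ * (ζ + 1/2)))), abs_mul]
    have hnum : |ξ - ζ| * |ξ + ζ + 1/2| ≤ 2 * (2 * L + 5) :=
      mul_le_mul (abs_le.2 ⟨by linarith, by linarith⟩) (abs_le.2 ⟨by linarith, by linarith⟩)
        (abs_nonneg _) (by norm_num)
    have hA : L * L ≤ ξ * (ξ + 1/2) := mul_le_mul hξ₁ (by linarith) hL.le hξ0.le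
    have hB : L * L ≤ ζ * (ζ + 1/2) := mul_le_mul hζ₁ (by linarith) hL.le hζ0.le
    calc _ ≤ 2 * (2 * L + 5) / (2 * L ^ 4) := by
          gcongr
          nlinarith [mul_le_mul hA hB (by positivity) (by positivity : (0:ℝ) ≤ ξ * (ξ + 1/2))]
      _ = _ := by field_simp

lemma abs_sub_sub_mul_sub_le {f g f' g' : ℝ → ℝ} {s : Set ℝ} {B u δ w : ℝ} (hs : Convex ℝ s)
    (hf : ∀ y ∈ s, HasDerivAt f (f' y) y) (hg : ∀ y ∈ s, HasDerivAt g (g' y) y)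
    (hB : ∀ ξ ∈ s, ∀ ζ ∈ s, |f' ξ - g' ζ| ≤ B) (hu : u ∈ s) (huδ : u + δ ∈ s) (hw : w ∈ s)
    (hw₁ : w + 1 ∈ s) :
    |(f (u + δ) - f u) - δ * (g (w + 1) - g w)| ≤ B * |δ| := by
  have hseg : Icc w (w + 1) ⊆ s := hs.ordConnected.out hw hw₁
  obtain ⟨ζ, hζ, hgζ⟩ := exists_hasDerivAt_eq_slope g g' (lt_add_one w)
    (fun y hy => (hg y (hseg hy)).continuousAt.continuousWithinAt)
    (fun y hy => hg y (hseg (Ioo_subset_Icc_self hy)))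
  rw [add_sub_cancel_left, div_one] at hgζ
  -- `ζ` is a mean value point of `g`; apply the mean value inequality to `f - g' ζ • id`.
  have key := hs.norm_image_sub_le_of_norm_hasDerivWithin_le (f := fun y => f y - g' ζ * y)
    (fun y hy => ((hf y hy).sub ((hasDerivAt_id y).const_mul (g' ζ))).hasDerivWithinAt)
    (fun y hy => by simpa using hB y hy ζ (hseg (Ioo_subset_Icc_self hζ))) hu huδ
  rw [← hgζ]
  simpa only [Real.norm_eq_abs, add_sub_cancel_left, show ∀ a b : ℝ,
    f a - g' ζ * a - (f b - g' ζ * b) = f a - f b - (a - b) * g' ζ by intros; ring] using key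

noncomputable def majorant (t m : ℝ) : ℝ := t ^ 2 / (m ^ 2 * (m ^ 2 + t ^ 2)) + 1 / m ^ 3

lemma majorant_nonneg (t : ℝ) {m : ℝ} (hm : 0 ≤ m) : 0 ≤ majorant t m := by
  unfold majorant; positivity

lemma mul_majorant (t m : ℝ) : m * majorant t m = t ^ 2 / (m * (m ^ 2 + t ^ 2)) + 1 / m ^ 2 := by
  rcases eq_or_ne m 0 with rfl | hm
  · simp [majorant]
  · unfold majorant
    field_simp

lemma abs_logRatioDeriv_sub_le_majorant (t : ℝ) {e m ξ ζ : ℝ} (he : 0 < e) (he₁ : e ≤ 1)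
    (hm : 1 ≤ m) (hξ : ξ ∈ Icc (m - 1 + e) (m + 1 + e)) (hζ : ζ ∈ Icc (m - 1 + e) (m + 1 + e)) :
    |logRatioDeriv t ξ - logRatioDeriv 0 ζ| ≤ 7 / e ^ 4 * majorant t m := by
  set L := m - 1 + e with hLdef
  have hLm : L ≤ m := by linarith
  have heL : e * m ≤ L := by nlinarith
  have hL : 0 < L := by nlinarith
  have hIcc : Icc (m - 1 + e) (m + 1 + e) = Icc L (L + 2) := by rw [hLdef]; ring_nf
  rw [hIcc] at hξ hζ
  refine (abs_logRatioDeriv_sub_le t hL hξ hζ).trans ?_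
  have hL2 : e ^ 2 * m ^ 2 ≤ L ^ 2 := by rw [← mul_pow]; gcongr
  have he2 : e ^ 2 ≤ 1 := by nlinarith
  have hden : e ^ 4 * (m ^ 2 * (m ^ 2 + t ^ 2)) ≤ L ^ 2 * (L ^ 2 + t ^ 2) := by
    have : e ^ 2 * (m ^ 2 + t ^ 2) ≤ L ^ 2 + t ^ 2 := by nlinarith [sq_nonneg t]
    nlinarith [mul_le_mul hL2 this (by positivity) (by positivity)]
  have h₁ : 2 * t ^ 2 / (L ^ 2 * (L ^ 2 + t ^ 2))
      ≤ 7 / e ^ 4 * (t ^ 2 / (m ^ 2 * (m ^ 2 + t ^ 2))) := by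
    calc _ ≤ 7 * t ^ 2 / (e ^ 4 * (m ^ 2 * (m ^ 2 + t ^ 2))) := by
          gcongr
          norm_num
      _ = _ := by field_simp
  have h₂ : (2 * L + 5) / L ^ 4 ≤ 7 / e ^ 4 * (1 / m ^ 3) := by
    calc _ ≤ (7 * m) / (e * m) ^ 4 := by gcongr; linarith
      _ = _ := by field_simp
  unfold majorant
  linarith

lemma summable_mul_majorant (t : ℝ) : Summable fun m : ℕ => (m : ℝ) * majorant t m := by
  refine Summable.of_nonneg_of_le
    (fun m => mul_nonneg m.cast_nonneg (majorant_nonneg t m.cast_nonneg))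
    (fun m => ?_) ((Real.summable_one_div_nat_pow.mpr one_lt_two).mul_left (t ^ 2 + 1))
  rcases Nat.eq_zero_or_pos m with rfl | hm
  · simp
  have hm : (1 : ℝ) ≤ m := by exact_mod_cast hm
  rw [mul_majorant]
  have : t ^ 2 / (m * (m ^ 2 + t ^ 2)) ≤ t ^ 2 / m ^ 2 := by
    gcongr
    nlinarith [sq_nonneg t]
  calc _ ≤ t ^ 2 / m ^ 2 + 1 / m ^ 2 := by linarith
    _ = _ := by ring

lemma summable_majorant_nat_add (t : ℝ) (n : ℕ) : Summable fun j : ℕ => majorant t (j + n : ℕ) := by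
  refine (summable_nat_add_iff n).2 ((summable_mul_majorant t).of_nonneg_of_le
    (fun m => majorant_nonneg t m.cast_nonneg) (fun m => ?_))
  rcases Nat.eq_zero_or_pos m with rfl | hm
  · simp [majorant]
  · exact le_mul_of_one_le_left (majorant_nonneg t m.cast_nonneg) (by exact_mod_cast hm)

lemma sq_div_mul_add_sq_le_log_sub (t : ℝ) {m : ℝ} (hm : 1 ≤ m) :
    t ^ 2 / ((m + 1) * ((m + 1) ^ 2 + t ^ 2))
      ≤ Real.log (1 + t ^ 2 / m ^ 2) - Real.log (1 + t ^ 2 / (m + 1) ^ 2) := by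
  have hm0 : 0 < m := by linarith
  have ha : 0 < 1 + t ^ 2 / m ^ 2 := by positivity
  have hb : 0 < 1 + t ^ 2 / (m + 1) ^ 2 := by positivity
  have hlog := Real.log_le_sub_one_of_pos (div_pos hb ha)
  rw [Real.log_div hb.ne' ha.ne'] at hlog
  have he : (1 + t ^ 2 / (m + 1) ^ 2) / (1 + t ^ 2 / m ^ 2) - 1
      = -(t ^ 2 * (2 * m + 1) / ((m + 1) ^ 2 * (m ^ 2 + t ^ 2))) := by
    field_simp
    ring
  have hfin : t ^ 2 / ((m + 1) * ((m + 1) ^ 2 + t ^ 2))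
      ≤ t ^ 2 * (2 * m + 1) / ((m + 1) ^ 2 * (m ^ 2 + t ^ 2)) := by
    rw [div_le_div_iff₀ (by positivity) (by positivity)]
    nlinarith [sq_nonneg t, sq_nonneg m, sq_nonneg (t * m), sq_nonneg (t ^ 2)]
  linarith

lemma tsum_sq_div_mul_add_sq_le (t : ℝ) :
    ∑' m : ℕ, t ^ 2 / ((m : ℝ) * ((m : ℝ) ^ 2 + t ^ 2)) ≤ 1 + Real.log (1 + t ^ 2) := by
  have hpartial : ∀ N : ℕ, ∑ m ∈ range (N + 2), t ^ 2 / ((m : ℝ) * ((m : ℝ) ^ 2 + t ^ 2))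
      ≤ 1 + Real.log (1 + t ^ 2) - Real.log (1 + t ^ 2 / ((N : ℝ) + 1) ^ 2) := by
    intro N
    induction N with
    | zero =>
      norm_num [sum_range_succ]
      rw [div_le_one (by positivity)]
      linarith
    | succ N ih =>
      rw [sum_range_succ]
      have := sq_div_mul_add_sq_le_log_sub t
        (by linarith [N.cast_nonneg (α := ℝ)] : (1 : ℝ) ≤ N + 1)
      push_cast
      ring_nf at this ih ⊢
      linarith
  refine Real.tsum_le_of_sum_range_le (fun m => ?_) (fun N => ?_)
  · positivity
  calc _ ≤ ∑ m ∈ range (N + 2), t ^ 2 / ((m : ℝ) * ((m : ℝ) ^ 2 + t ^ 2)) :=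
        sum_le_sum_of_subset_of_nonneg (range_subset_range.2 (by omega))
          (fun _ _ _ => by positivity)
    _ ≤ _ := by
        have : (1 : ℝ) ≤ 1 + t ^ 2 / ((N : ℝ) + 1) ^ 2 := le_add_of_nonneg_right (by positivity)
        linarith [hpartial N, Real.log_nonneg this]

lemma tsum_mul_majorant_le (t : ℝ) :
    ∑' m : ℕ, (m : ℝ) * majorant t m ≤ 3 + Real.log (1 + t ^ 2) := by
  have hζ2 : ∑' m : ℕ, 1 / (m : ℝ) ^ 2 ≤ 2 := by
    rw [hasSum_zeta_two.tsum_eq]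
    nlinarith [Real.pi_lt_d2, Real.pi_pos]
  have hs₁ : Summable fun m : ℕ => t ^ 2 / ((m : ℝ) * ((m : ℝ) ^ 2 + t ^ 2)) :=
    ((summable_mul_majorant t).sub (Real.summable_one_div_nat_pow.mpr one_lt_two)).congr
      (fun m => by rw [mul_majorant]; ring)
  simp_rw [mul_majorant]
  rw [hs₁.tsum_add (Real.summable_one_div_nat_pow.mpr one_lt_two)]
  linarith [tsum_sq_div_mul_add_sq_le t]

/-- Summing the tails `∑_{m > n} f m` over `n` counts each `f m` exactly `m` times. -/
lemma sum_range_tsum_nat_add_le {f : ℕ → ℝ} (hf : ∀ m, 0 ≤ f m)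
    (hmf : Summable fun m : ℕ => (m : ℝ) * f m) (N : ℕ) :
    ∑ n ∈ range N, ∑' j, f (j + (n + 1)) ≤ ∑' m : ℕ, (m : ℝ) * f m := by
  have htail : ∀ k, Summable fun j => f (j + (k + 1)) := fun k =>
    ((summable_nat_add_iff (k + 1)).2 hmf).of_nonneg_of_le (fun j => hf _)
      (fun j => le_mul_of_one_le_left (hf _) (by push_cast; linarith [j.cast_nonneg (α := ℝ)]))
  have hsplit : ∀ N : ℕ, ∑ n ∈ range N, ∑' j, f (j + (n + 1))
      = ∑ m ∈ range (N + 1), (m : ℝ) * f m + N * ∑' j, f (j + (N + 1)) := by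
    intro N
    induction N with
    | zero => simp
    | succ N ih =>
      rw [sum_range_succ, ih, sum_range_succ _ (N + 1), (htail N).tsum_eq_zero_add]
      simp only [zero_add, show ∀ j, j + 1 + (N + 1) = j + (N + 1 + 1) from fun j => by omega]
      push_cast
      ring
  rw [hsplit, ← hmf.sum_add_tsum_nat_add (N + 1), ← tsum_mul_left]
  refine add_le_add_right (((htail N).mul_left _).tsum_le_tsum (fun j => ?_)
    ((summable_nat_add_iff (N + 1)).2 hmf)) _
  gcongr
  · exact hf _
  · exact_mod_cast (by omega : N ≤ j + (N + 1))

lemma log_norm_ofReal_add_mul_I (a b : ℝ) :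
    Real.log ‖(a : ℂ) + b * I‖ = Real.log (a ^ 2 + b ^ 2) / 2 := by
  rw [norm_add_mul_I, Real.log_sqrt (by positivity)]

lemma natCast_add_ne_zero {z : ℂ} (hz : 0 < z.re) (j : ℕ) : z + j ≠ 0 := by
  intro h
  have := congrArg Complex.re h
  simp only [add_re, natCast_re, zero_re] at this
  linarith [j.cast_nonneg (α := ℝ)]

/-- The powers `m ^ zᵢ` in `GammaSeq` cancel because `z₁ + z₂ = z₃ + z₄`. -/
lemma tendsto_prod_div_Gamma {z₁ z₂ z₃ z₄ : ℂ} (hsum : z₁ + z₂ = z₃ + z₄) (h₁ : 0 < z₁.re)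
    (h₂ : 0 < z₂.re) (h₃ : 0 < z₃.re) (h₄ : 0 < z₄.re) :
    Tendsto (fun J => ∏ j ∈ range J, (z₃ + j) * (z₄ + j) / ((z₁ + j) * (z₂ + j))) atTop
      (𝓝 (Gamma z₁ * Gamma z₂ / (Gamma z₃ * Gamma z₄))) := by
  have hT := ((GammaSeq_tendsto_Gamma z₁).mul (GammaSeq_tendsto_Gamma z₂)).div
    ((GammaSeq_tendsto_Gamma z₃).mul (GammaSeq_tendsto_Gamma z₄))
    (mul_ne_zero (Gamma_ne_zero_of_re_pos h₃) (Gamma_ne_zero_of_re_pos h₄))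
  rw [← tendsto_add_atTop_iff_nat 1]
  refine hT.congr' ?_
  filter_upwards [eventually_ge_atTop 1] with m hm
  have hm0 : (m : ℂ) ≠ 0 := Nat.cast_ne_zero.2 (by omega)
  have hp : ∀ {z : ℂ}, 0 < z.re → ∏ j ∈ range (m + 1), (z + j) ≠ 0 :=
    fun hz => prod_ne_zero_iff.2 fun j _ => natCast_add_ne_zero hz j
  have hfac : (m : ℂ) ^ z₁ * (m : ℂ) ^ z₂ = (m : ℂ) ^ z₃ * (m : ℂ) ^ z₄ := by
    rw [← cpow_add _ _ hm0, ← cpow_add _ _ hm0, hsum]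
  have hcpow : ∀ z : ℂ, (m : ℂ) ^ z ≠ 0 := fun z => cpow_ne_zero_iff.2 (Or.inl hm0)
  have hfact : (m.factorial : ℂ) ≠ 0 := Nat.cast_ne_zero.2 m.factorial_ne_zero
  have := hp h₁; have := hp h₂; have := hp h₃; have := hp h₄
  simp only [Pi.div_apply, Complex.GammaSeq, prod_div_distrib, prod_mul_distrib]
  field_simp
  rw [div_eq_iff (mul_ne_zero (hcpow z₃) (hcpow z₄))]
  linear_combination hfac

lemma tendsto_sum_logRatio_zero_sub (a : ℝ) :
    Tendsto (fun J => ∑ j ∈ range J, (logRatio 0 (a + j) - logRatio 0 (a + j + 1))) atTop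
      (𝓝 (logRatio 0 a)) := by
  have hlim : Tendsto (fun J : ℕ => logRatio 0 (a + J)) atTop (𝓝 0) :=
    tendsto_logRatio_zero_atTop.comp
      (tendsto_atTop_add_const_left _ _ tendsto_natCast_atTop_atTop)
  have := (tendsto_const_nhds (x := logRatio 0 a)).sub hlim
  rw [sub_zero] at this
  refine this.congr fun J => ?_
  simp_rw [add_assoc a, ← Nat.cast_add_one]
  rw [sum_range_sub' (fun j : ℕ => logRatio 0 (a + j)), Nat.cast_zero, add_zero]

section Kterm

variable {n : ℕ} {x : ℝ}

lemma Kterm_ne_zero (hn : 1 ≤ n) (hx : x ∈ Ioo (-1/2 : ℝ) (3/2)) (t : ℝ) :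
    Kterm n (x + t * I) ≠ 0 := by
  obtain ⟨hx₁, hx₂⟩ := hx
  have hn' : (1 : ℝ) ≤ n := by exact_mod_cast hn
  have hΓ : ∀ z : ℂ, 0 < z.re → Gamma z ≠ 0 := fun z => Gamma_ne_zero_of_re_pos
  have hbase : (n : ℂ) / (n - 1/2) ≠ 0 := by
    refine div_ne_zero (Nat.cast_ne_zero.2 (by omega)) fun h => ?_
    have := congrArg Complex.re h
    simp at this
    linarith
  unfold Kterm
  refine mul_ne_zero
    (div_ne_zero (mul_ne_zero (hΓ _ ?_) (hΓ _ ?_)) (mul_ne_zero (hΓ _ ?_) (hΓ _ ?_)))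
    (cpow_ne_zero_iff.2 (Or.inl hbase)) <;> simp <;> linarith

lemma tendsto_sum_logRatio_Gamma_quotient (hn : 1 ≤ n) (hx : x ∈ Ioo (-1/2 : ℝ) (3/2)) (t : ℝ) :
    Tendsto (fun J => ∑ j ∈ range J,
      (logRatio t (n - 1/2 + x + j) - logRatio t (n - 1/2 + x + j + (1 - 2 * x)))) atTop
      (𝓝 (Real.log ‖Gamma (n - 1/2 + (x + t * I)) * Gamma (n + 1 - (x + t * I))
        / (Gamma (n + 1/2 - (x + t * I)) * Gamma (n + (x + t * I)))‖)) := by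
  obtain ⟨hx₁, hx₂⟩ := hx
  have hn' : (1 : ℝ) ≤ n := by exact_mod_cast hn
  set l : ℂ := x + t * I
  have hz₁ : ∀ j : ℕ, n - 1/2 + l + j = ((n - 1/2 + x + j : ℝ) : ℂ) + t * I := fun j => by
    simp only [l]; push_cast; ring
  have hz₂ : ∀ j : ℕ,
      n + 1 - l + j = ((n - 1/2 + x + j + (1 - 2 * x) + 1/2 : ℝ) : ℂ) + (-t : ℝ) * I := fun j => by
    simp only [l]; push_cast; ring
  have hz₃ : ∀ j : ℕ, n + 1/2 - l + j = ((n - 1/2 + x + j + (1 - 2 * x) : ℝ) : ℂ) + (-t : ℝ) * I :=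
    fun j => by simp only [l]; push_cast; ring
  have hz₄ : ∀ j : ℕ, n + l + j = ((n - 1/2 + x + j + 1/2 : ℝ) : ℂ) + t * I := fun j => by
    simp only [l]; push_cast; ring
  have hre : ∀ {z : ℂ} {a b : ℝ}, z + (0 : ℕ) = (a : ℂ) + b * I → 0 < a → 0 < z.re := by
    intro z a b h ha
    rw [Nat.cast_zero, add_zero] at h
    simpa [h] using ha
  have h₁ := hre (hz₁ 0) (by push_cast; linarith)
  have h₂ := hre (hz₂ 0) (by push_cast; linarith)
  have h₃ := hre (hz₃ 0) (by push_cast; linarith)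
  have h₄ := hre (hz₄ 0) (by push_cast; linarith)
  have hne : ∀ {z : ℂ}, 0 < z.re → ∀ j : ℕ, ‖z + j‖ ≠ 0 := fun hz j =>
    norm_ne_zero_iff.2 (natCast_add_ne_zero hz j)
  refine ((tendsto_prod_div_Gamma (by ring) h₁ h₂ h₃ h₄).norm.log (norm_ne_zero_iff.2
    (div_ne_zero (mul_ne_zero (Gamma_ne_zero_of_re_pos h₁) (Gamma_ne_zero_of_re_pos h₂))
      (mul_ne_zero (Gamma_ne_zero_of_re_pos h₃) (Gamma_ne_zero_of_re_pos h₄))))).congr fun J => ?_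
  rw [norm_prod, Real.log_prod fun j _ => by
    simpa only [norm_div, norm_mul] using div_ne_zero (mul_ne_zero (hne h₃ j) (hne h₄ j))
      (mul_ne_zero (hne h₁ j) (hne h₂ j))]
  refine sum_congr rfl fun j _ => ?_
  rw [norm_div, norm_mul, norm_mul,
    Real.log_div (mul_ne_zero (hne h₃ j) (hne h₄ j)) (mul_ne_zero (hne h₁ j) (hne h₂ j)),
    Real.log_mul (hne h₃ j) (hne h₄ j), Real.log_mul (hne h₁ j) (hne h₂ j),
    hz₁, hz₂, hz₃, hz₄]
  simp only [log_norm_ofReal_add_mul_I, logRatio, neg_sq]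
  ring

lemma log_norm_Kterm_cpow (hn : 1 ≤ n) (t : ℝ) :
    Real.log ‖((n : ℂ) / (n - 1/2)) ^ (2 * (x + t * I) - 1)‖
      = -(1 - 2 * x) * logRatio 0 (n - 1/2) := by
  have hb : (0 : ℝ) < n - 1/2 := by
    have : (1 : ℝ) ≤ n := by exact_mod_cast hn
    linarith
  rw [show (n : ℂ) / (n - 1/2) = ((n / (n - 1/2) : ℝ) : ℂ) by push_cast; rfl,
    norm_cpow_eq_rpow_re_of_pos (by positivity), Real.log_rpow (by positivity), logRatio_zero hb,
    sub_add_cancel]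
  simp

/-- `log ‖Kterm n (x + t i)‖` as a series of second differences of `logRatio`: Euler's product
for the Gamma quotient gives the first differences in the step `1 - 2x`, and the factor
`(n / (n - 1/2)) ^ (2λ - 1)` telescopes into the differences in the step `1`. -/
lemma tendsto_sum_logRatio_Kterm (hn : 1 ≤ n) (hx : x ∈ Ioo (-1/2 : ℝ) (3/2)) (t : ℝ) :
    Tendsto (fun J => ∑ j ∈ range J,
      ((logRatio t (n - 1/2 + x + j) - logRatio t (n - 1/2 + x + j + (1 - 2 * x)))
        - (1 - 2 * x) * (logRatio 0 (n - 1/2 + j) - logRatio 0 (n - 1/2 + j + 1))))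
      atTop (𝓝 (Real.log ‖Kterm n (x + t * I)‖)) := by
  have hΓ := tendsto_sum_logRatio_Gamma_quotient hn hx t
  have hK : Real.log ‖Kterm n (x + t * I)‖ = Real.log ‖Gamma (n - 1/2 + (x + t * I))
      * Gamma (n + 1 - (x + t * I)) / (Gamma (n + 1/2 - (x + t * I)) * Gamma (n + (x + t * I)))‖
      - (1 - 2 * x) * logRatio 0 (n - 1/2) := by
    have hKne := Kterm_ne_zero hn hx t
    rw [Kterm, norm_mul, Real.log_mul (norm_ne_zero_iff.2 (left_ne_zero_of_mul hKne))
      (norm_ne_zero_iff.2 (right_ne_zero_of_mul hKne)), log_norm_Kterm_cpow hn]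
    ring
  rw [hK]
  refine (hΓ.sub ((tendsto_sum_logRatio_zero_sub _).const_mul (1 - 2 * x))).congr fun J => ?_
  rw [mul_sum, ← sum_sub_distrib]

end Kterm

lemma abs_log_norm_Kterm_le {n : ℕ} {x e : ℝ} (hn : 1 ≤ n) (he : 0 < e) (he₁ : e ≤ 1/2)
    (hxe : e ≤ x + 1/2) (hxe' : e ≤ 3/2 - x) (t : ℝ) :
    |Real.log ‖Kterm n (x + t * I)‖|
      ≤ |1 - 2 * x| * (7 / e ^ 4) * ∑' j : ℕ, majorant t (j + n : ℕ) := by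
  refine le_of_tendsto (tendsto_sum_logRatio_Kterm hn ⟨by linarith, by linarith⟩ t).abs
    (Eventually.of_forall fun J => ?_)
  refine (abs_sum_le_sum_abs _ _).trans ?_
  calc _ ≤ ∑ j ∈ range J, |1 - 2 * x| * (7 / e ^ 4) * majorant t (j + n : ℕ) :=
        sum_le_sum fun j _ => ?_
    _ ≤ _ := by
        rw [← mul_sum]
        gcongr
        exact Summable.sum_le_tsum _ (fun j _ => majorant_nonneg t (Nat.cast_nonneg _))
          (summable_majorant_nat_add t n)
  have hn' : (1 : ℝ) ≤ n := by exact_mod_cast hn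
  set m : ℝ := ((j + n : ℕ) : ℝ)
  have hm : m = n + j := by simp only [m]; push_cast; ring
  have hpos : ∀ y ∈ Icc (m - 1 + e) (m + 1 + e), 0 < y := fun y hy => by
    linarith [hy.1, j.cast_nonneg (α := ℝ)]
  have key := abs_sub_sub_mul_sub_le (convex_Icc (m - 1 + e) (m + 1 + e))
    (fun y hy => hasDerivAt_logRatio t (hpos y hy)) (fun y hy => hasDerivAt_logRatio 0 (hpos y hy))
    (fun ξ hξ ζ hζ => abs_logRatioDeriv_sub_le_majorant t he (by linarith)
      (by linarith [j.cast_nonneg (α := ℝ)]) hξ hζ)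
    (u := n - 1/2 + x + j) (δ := 1 - 2 * x) (w := n - 1/2 + j)
    ⟨by linarith, by linarith⟩ ⟨by linarith, by linarith⟩ ⟨by linarith, by linarith⟩
    ⟨by linarith, by linarith⟩
  rw [← abs_neg, show ∀ a b c d : ℝ, -((a - b) - (1 - 2 * x) * (c - d))
    = (b - a) - (1 - 2 * x) * (d - c) by intros; ring]
  exact key.trans_eq (by ring)

lemma abs_sum_log_norm_Kterm_le {x e : ℝ} (he : 0 < e) (he₁ : e ≤ 1/2) (hxe : e ≤ x + 1/2)
    (hxe' : e ≤ 3/2 - x) (t : ℝ) (N : ℕ) :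
    |∑ n ∈ range N, Real.log ‖Kterm (n + 1) (x + t * I)‖|
      ≤ |1 - 2 * x| * (7 / e ^ 4) * (3 + Real.log (1 + t ^ 2)) := by
  refine (abs_sum_le_sum_abs _ _).trans ?_
  calc _ ≤ ∑ n ∈ range N, |1 - 2 * x| * (7 / e ^ 4) * ∑' j : ℕ, majorant t (j + (n + 1) : ℕ) :=
        sum_le_sum fun n _ => abs_log_norm_Kterm_le (by omega) he he₁ hxe hxe' t
    _ ≤ _ := by
        rw [← mul_sum]
        gcongr
        exact (sum_range_tsum_nat_add_le (fun m => majorant_nonneg t m.cast_nonneg)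
          (summable_mul_majorant t) N).trans (tsum_mul_majorant_le t)

/-- The bound also covers the junk value `1` of a non-multipliable product. -/
lemma norm_tprod_mem_Icc {𝕜 : Type*} [NormedField 𝕜] {f : ℕ → 𝕜} {c : ℝ} (hf : ∀ n, f n ≠ 0)
    (h : ∀ N, |∑ n ∈ range N, Real.log ‖f n‖| ≤ c) :
    Real.exp (-c) ≤ ‖∏' n, f n‖ ∧ ‖∏' n, f n‖ ≤ Real.exp c := by
  have hc : 0 ≤ c := by simpa using h 0
  have hpartial : ∀ N,
      Real.exp (-c) ≤ ‖∏ n ∈ range N, f n‖ ∧ ‖∏ n ∈ range N, f n‖ ≤ Real.exp c := by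
    intro N
    have hpos : 0 < ∏ n ∈ range N, ‖f n‖ := prod_pos fun n _ => norm_pos_iff.2 (hf n)
    rw [norm_prod, ← Real.exp_log hpos, Real.exp_le_exp, Real.exp_le_exp, ← abs_le,
      Real.log_prod fun n _ => norm_ne_zero_iff.2 (hf n)]
    exact h N
  by_cases hm : Multipliable f
  · have ht := hm.hasProd.tendsto_prod_nat.norm
    exact ⟨ge_of_tendsto' ht fun N => (hpartial N).1, le_of_tendsto' ht fun N => (hpartial N).2⟩
  · rw [tprod_eq_one_of_not_multipliable hm, norm_one]
    exact ⟨Real.exp_le_one_iff.2 (by linarith), Real.one_le_exp hc⟩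

lemma exists_norm_Kfun_mem_Icc {x : ℝ} (hx : x ∈ Ioo (-1/2 : ℝ) (3/2)) :
    ∃ A ≥ 0, ∀ t : ℝ, Real.exp (-(A * (3 + Real.log (1 + t ^ 2)))) ≤ ‖Kfun (x + t * I)‖ ∧
      ‖Kfun (x + t * I)‖ ≤ Real.exp (A * (3 + Real.log (1 + t ^ 2))) := by
  obtain ⟨hx₁, hx₂⟩ := hx
  set e := min (1/2) (min (x + 1/2) (3/2 - x))
  have he : 0 < e := lt_min (by norm_num) (lt_min (by linarith) (by linarith))
  refine ⟨|1 - 2 * x| * (7 / e ^ 4), by positivity, fun t => ?_⟩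
  exact norm_tprod_mem_Icc (fun n => Kterm_ne_zero (by omega) ⟨hx₁, hx₂⟩ t)
    (fun N => (abs_sum_log_norm_Kterm_le he (min_le_left _ _)
      ((min_le_right _ _).trans (min_le_left _ _))
      ((min_le_right _ _).trans (min_le_right _ _)) t N))

lemma half_exp_le_norm_exp_sub_exp (ϑ : ℝ) {η : ℝ} (hη : 1 ≤ |η|) :
    Real.exp (π * |η|) / 2
      ≤ ‖Complex.exp (I * π * (ϑ + η * I)) - Complex.exp (-(I * π * (ϑ + η * I)))‖ := by
  set z : ℂ := I * π * (ϑ + η * I)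
  have hz : z.re = -(π * η) := by simp [z]
  have hsinh : |Real.exp (π * η) - Real.exp (-(π * η))|
      = Real.exp (π * |η|) - Real.exp (-(π * |η|)) := by
    have := Real.abs_sinh (π * η)
    rw [Real.sinh_eq, Real.sinh_eq, abs_mul, abs_of_pos pi_pos, abs_div, abs_two] at this
    linarith
  have hkey : Real.exp (π * |η|) - Real.exp (-(π * |η|)) ≤ ‖Complex.exp z - Complex.exp (-z)‖ := by
    rw [← hsinh, norm_sub_rev]
    convert abs_norm_sub_norm_le (Complex.exp (-z)) (Complex.exp z) using 3 <;>
      simp [Complex.norm_exp, hz]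
  have hlarge : 2 ≤ Real.exp (π * |η|) := by
    nlinarith [Real.add_one_le_exp (π * |η|), pi_gt_three]
  have hsmall : Real.exp (-(π * |η|)) ≤ 1 := Real.exp_le_one_iff.2 (by nlinarith [pi_pos])
  linarith

lemma exists_mul_log_one_add_sq_le {S c : ℝ} (hS : 0 ≤ S) (hc : 0 < c) :
    ∃ B, ∀ t : ℝ, S * Real.log (1 + t ^ 2) ≤ B + c * |t| := by
  set W := max 1 (2 * S / c)
  have hW : 1 ≤ W := le_max_left _ _
  have hSW : 2 * S ≤ c * W := by
    have := (div_le_iff₀ hc).1 (le_max_right 1 (2 * S / c))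
    linarith
  refine ⟨2 * S * Real.log W, fun t => ?_⟩
  have h₁ : Real.log (1 + t ^ 2) ≤ 2 * Real.log (1 + |t|) := by
    rw [show 2 * Real.log (1 + |t|) = Real.log ((1 + |t|) ^ 2) by
      rw [Real.log_pow]; push_cast; ring]
    exact Real.log_le_log (by positivity) (by nlinarith [sq_abs t, abs_nonneg t])
  have h₂ : Real.log (1 + |t|) ≤ Real.log W + |t| / W := by
    rw [← Real.log_exp (|t| / W), ← Real.log_mul (by positivity) (by positivity)]
    refine Real.log_le_log (by positivity) ?_
    nlinarith [Real.add_one_le_exp (|t| / W), mul_div_cancel₀ |t| (by positivity : W ≠ 0)]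
  have h₃ : 2 * S * (|t| / W) ≤ c * |t| := by
    rw [← mul_div_assoc, div_le_iff₀ (by positivity)]
    nlinarith [abs_nonneg t]
  nlinarith

lemma abs_bounds_of_mem_sectors {M τ η : ℝ} (hM : 1 ≤ M)
    (h : (M - τ < η ∧ η < -τ/2 ∧ 2 * M < τ) ∨ (-(3/2) * τ < η ∧ η < -M - τ ∧ 2 * M < τ) ∨
      (-τ/2 < η ∧ η < -τ - M ∧ τ < -2 * M) ∨ (M - τ < η ∧ η < -(3/2) * τ ∧ τ < -2 * M)) :
    |τ + η| ≤ |τ| ∧ |τ| / 2 ≤ |η| ∧ 1 ≤ |η| := by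
  rcases abs_cases τ with ⟨hτ, _⟩ | ⟨hτ, _⟩ <;> rcases abs_cases η with ⟨hη, _⟩ | ⟨hη, _⟩ <;>
    rcases abs_cases (τ + η) with ⟨hτη, _⟩ | ⟨hτη, _⟩ <;> rw [hτ, hη, hτη] <;>
    rcases h with ⟨_, _, _⟩ | ⟨_, _, _⟩ | ⟨_, _, _⟩ | ⟨_, _, _⟩ <;>
    exact ⟨by linarith, by linarith, by linarith⟩

lemma exists_norm_Phi_le {σ ϑ : ℝ} (hσ : σ ∈ Ioo (-1/2 : ℝ) (3/2)) (hσϑ : 0 < σ + ϑ)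
    (hσϑ' : σ + ϑ < 3/2) :
    ∃ S ≥ 0, ∀ τ η : ℝ, 1 ≤ |η| → |τ + η| ≤ |τ| →
      ‖Phi (σ + τ * I) (ϑ + η * I)‖
        ≤ 2 / (σ + ϑ) * Real.exp (S * (3 + Real.log (1 + τ ^ 2)) - π * |η|) := by
  obtain ⟨A₁, hA₁, hK₁⟩ := exists_norm_Kfun_mem_Icc hσ
  obtain ⟨A₂, hA₂, hK₂⟩ := exists_norm_Kfun_mem_Icc (x := σ + ϑ) ⟨by linarith, hσϑ'⟩
  refine ⟨A₁ + A₂, by positivity, fun τ η hη hτη => ?_⟩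
  have hsum : (σ + τ * I) + (ϑ + η * I) = ((σ + ϑ : ℝ) : ℂ) + (τ + η : ℝ) * I := by push_cast; ring
  have hre : σ + ϑ ≤ ‖(σ + τ * I) + (ϑ + η * I)‖ := by
    rw [hsum]
    simpa using Complex.re_le_norm ((σ + ϑ : ℝ) + (τ + η : ℝ) * I)
  have hK : Real.exp (-(A₂ * (3 + Real.log (1 + (τ + η) ^ 2))))
      ≤ ‖Kfun ((σ + τ * I) + (ϑ + η * I))‖ := by
    rw [hsum]; exact (hK₂ (τ + η)).1
  have hlog : Real.log (1 + (τ + η) ^ 2) ≤ Real.log (1 + τ ^ 2) :=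
    Real.log_le_log (by positivity) (by nlinarith [sq_le_sq.2 hτη])
  unfold Phi
  rw [norm_div, norm_div, norm_mul]
  calc _ ≤ Real.exp (A₁ * (3 + Real.log (1 + τ ^ 2)))
        / ((σ + ϑ) * Real.exp (-(A₂ * (3 + Real.log (1 + (τ + η) ^ 2)))))
        / (Real.exp (π * |η|) / 2) := by
        gcongr
        · exact (hK₁ τ).2
        · exact half_exp_le_norm_exp_sub_exp ϑ hη
    _ = 2 / (σ + ϑ) * Real.exp (A₁ * (3 + Real.log (1 + τ ^ 2))
          + A₂ * (3 + Real.log (1 + (τ + η) ^ 2)) - π * |η|) := by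
        rw [Real.exp_sub, Real.exp_add, Real.exp_neg]
        field_simp
    _ ≤ _ := by
        gcongr
        nlinarith

/-- for `ϑ ∈ (0,1)` and `σ ∈ (max{-1/2,-ϑ}, 3/2-ϑ)` there is `M₀ > 0`
such that for all `M ≥ M₀` there are `ε ∈ (0,π/2)` and `C = C(M,σ,ϑ) > 0` with
`|Φ(s,ζ)| ≤ C e^{-(π/2-ε)|η|} e^{-(π/4)|τ|}` whenever `s = σ+iτ`, `ζ = ϑ+iη` and
`(η,τ) ∈ Σ₃ ∪ Σ₅ ∪ Σ₉ ∪ Σ₁₁`, where `Σ₃ = {M-τ < η < -τ/2, τ > 2M}`,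
`Σ₅ = {-(3/2)τ < η < -M-τ, τ > 2M}`, `Σ₉ = {-τ/2 < η < -τ-M, τ < -2M}`,
`Σ₁₁ = {M-τ < η < -(3/2)τ, τ < -2M}`. -/
theorem stmt10 (ϑ σ : ℝ) (hϑ : ϑ ∈ Set.Ioo (0:ℝ) 1)
    (hσ : σ ∈ Set.Ioo (max (-1/2) (-ϑ)) (3/2 - ϑ)) :
    ∃ M₀ > (0 : ℝ), ∀ M ≥ M₀, ∃ ε ∈ Set.Ioo (0 : ℝ) (π/2), ∃ C > (0 : ℝ), ∀ τ η : ℝ,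
      ((M - τ < η ∧ η < -τ/2 ∧ 2 * M < τ) ∨
       (-(3/2) * τ < η ∧ η < -M - τ ∧ 2 * M < τ) ∨
       (-τ/2 < η ∧ η < -τ - M ∧ τ < -2 * M) ∨
       (M - τ < η ∧ η < -(3/2) * τ ∧ τ < -2 * M)) →
      ‖Phi ((σ : ℂ) + (τ : ℂ) * Complex.I) ((ϑ : ℂ) + (η : ℂ) * Complex.I)‖ ≤
        C * Real.exp (-(π/2 - ε) * |η|) * Real.exp (-(π/4) * |τ|) := by
  obtain ⟨hσ₁, hσ₂⟩ := hσ
  have hσϑ : 0 < σ + ϑ := by linarith [le_max_right (-1/2 : ℝ) (-ϑ)]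
  obtain ⟨S, hS, hΦ⟩ := exists_norm_Phi_le ⟨(le_max_left _ _).trans_lt hσ₁, by linarith [hϑ.1]⟩
    hσϑ (by linarith)
  obtain ⟨B, hB⟩ := exists_mul_log_one_add_sq_le hS (by positivity : 0 < π / 8)
  refine ⟨1, one_pos, fun M hM => ⟨π / 4, ⟨by positivity, by linarith [pi_pos]⟩,
    2 / (σ + ϑ) * Real.exp (3 * S + B), by positivity, fun τ η hsector => ?_⟩⟩
  obtain ⟨hτη, hητ, hη⟩ := abs_bounds_of_mem_sectors hM hsector
  refine (hΦ τ η hη hτη).trans ?_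
  rw [mul_assoc (2 / (σ + ϑ)), mul_assoc (2 / (σ + ϑ)), ← Real.exp_add, ← Real.exp_add]
  gcongr
  nlinarith [hB τ, pi_pos]
end

section
/- Let ϑ ∈ (0,1) and σ ∈ (max{−1/2, −ϑ}, 3/2 − ϑ), and let ω(λ) = λ·cot(λπ). There exists M₀ > 0 such that for all M ≥ M₀ there is a constant C = C(M, σ, ϑ) with |exp(−τ·arg ω(s) + (τ+η)·arg ω(s+ζ))| ≤ C whenever s = σ + iτ, ζ = ϑ + iη and (η,τ) ∈ Σ₂′ ∪ Σ₂″, where Σ₂′ = {η > 0, τ > 2M} and Σ₂″ = {−τ/2 < η < 0, τ > 2M}. In fact, both |η·arg ω(s+ζ)| and |τ·(arg ω(s+ζ) − arg ω(s))| are bounded by constants depending only on M, σ, ϑ on Σ₂′ ∪ Σ₂″. -/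
/-!
For `Im λ = b > 0` put `q = exp (2πiλ)`, so `‖q‖ = exp (-2πb)` and
`ω(λ) = -iλ · (1 + q) / (1 - q) = -iλ + O(‖λ‖ e^{-2πb})`.
Since `-iλ = b - i Re λ`, the argument of `ω(λ)` is `O(|Re λ| / b)` once `b` is large
compared with `|Re λ|`. On both regions `Im (s + ζ) = τ + η ≥ τ / 2` and `|η| ≤ τ + η`, so
`τ · arg ω(s)`, `τ · arg ω(s + ζ)` and `η · arg ω(s + ζ)` are all bounded.
-/

open Complex Filter Real

lemma Real.abs_le_abs_tan {x : ℝ} (h : |x| < π / 2) : |x| ≤ |Real.tan x| := by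
  have key := Real.le_tan (abs_nonneg x) h
  rcases abs_cases x with ⟨hx, -⟩ | ⟨hx, -⟩ <;> rw [hx] at key ⊢
  · exact key.trans (le_abs_self _)
  · rw [Real.tan_neg] at key
    exact key.trans (neg_le_abs _)

lemma Complex.abs_arg_le_abs_im_div_re {w : ℂ} (hw : 0 < w.re) : |arg w| ≤ |w.im| / w.re :=
  calc |arg w| ≤ |Real.tan (arg w)| :=
        Real.abs_le_abs_tan (abs_arg_lt_pi_div_two_iff.mpr (Or.inl hw))
    _ = |w.im| / w.re := by rw [tan_arg, abs_div, abs_of_pos hw]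

lemma Complex.abs_arg_le_of_norm_sub_le {w z : ℂ} {ε : ℝ} (hwz : ‖w - z‖ ≤ ε)
    (hε : ε < z.re) : |arg w| ≤ (|z.im| + ε) / (z.re - ε) := by
  have hre : z.re - ε ≤ w.re := by
    have := (abs_le.mp ((abs_re_le_norm (w - z)).trans hwz)).1
    rw [sub_re] at this
    linarith
  have him : |w.im| ≤ |z.im| + ε := by
    have := (abs_im_le_norm (w - z)).trans hwz
    rw [sub_im] at this
    linarith [abs_sub_abs_le_abs_sub w.im z.im]
  exact (abs_arg_le_abs_im_div_re (by linarith)).trans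
    (div_le_div₀ (by linarith [abs_nonneg z.im, norm_nonneg (w - z)]) him (by linarith) hre)

lemma norm_omegaFun_add_I_mul_le {l : ℂ} (hl : Real.exp (-(2 * π * l.im)) ≤ 1 / 2) :
    ‖omegaFun l + I * l‖ ≤ 4 * ‖l‖ * Real.exp (-(2 * π * l.im)) := by
  set q := Complex.exp (2 * π * I * l) with hq
  have hq_norm : ‖q‖ = Real.exp (-(2 * π * l.im)) := by
    rw [hq, norm_exp]
    congr 1
    simp [mul_re, mul_im]
  have h1q : 1 / 2 ≤ ‖1 - q‖ := by
    have := norm_sub_norm_le (1 : ℂ) q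
    rw [norm_one] at this
    linarith
  have h1q0 : 1 - q ≠ 0 := norm_pos_iff.mp (by linarith)
  have hω : omegaFun l + I * l = -I * l * (2 * q / (1 - q)) := by
    rw [omegaFun, mul_comm l (π : ℂ), cot_pi_eq_exp_ratio, ← hq]
    field_simp
    ring_nf
    simp only [I_sq]
    ring
  have hratio : 2 * ‖q‖ / ‖1 - q‖ ≤ 4 * ‖q‖ := by
    rw [div_le_iff₀ (by linarith)]
    nlinarith [norm_nonneg q]
  calc ‖omegaFun l + I * l‖ = ‖l‖ * (2 * ‖q‖ / ‖1 - q‖) := by simp [hω]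
    _ ≤ ‖l‖ * (4 * ‖q‖) := by gcongr
    _ = 4 * ‖l‖ * Real.exp (-(2 * π * l.im)) := by rw [hq_norm]; ring

lemma mul_exp_neg_two_pi_mul_le {b : ℝ} (hb : 1 ≤ b) :
    b * Real.exp (-(2 * π * b)) ≤ 1 / 16 := by
  have hexp := Real.quadratic_le_exp_of_nonneg (x := 2 * π * b) (by positivity)
  have hπ := Real.pi_gt_three
  rw [Real.exp_neg, ← div_eq_mul_inv, div_le_div_iff₀ (Real.exp_pos _) (by norm_num)]
  have hπb : 3 * b ≤ π * b := by nlinarith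
  nlinarith [mul_le_mul hπb hπb (by linarith) (by linarith)]

lemma abs_arg_omegaFun_le {a b : ℝ} (hb : 1 ≤ b) (hab : |a| ≤ b) :
    |arg (omegaFun (a + b * I))| ≤ (2 * |a| + 1) / b := by
  set l : ℂ := a + b * I
  have hl_im : l.im = b := by simp [l]
  have hl_norm : ‖l‖ ≤ 2 * b := by
    calc ‖l‖ ≤ |a| + |b| := by simpa [l] using norm_add_le (a : ℂ) (b * I)
      _ ≤ 2 * b := by rw [abs_of_nonneg (by linarith : (0:ℝ) ≤ b)]; linarith
  have hsmall := mul_exp_neg_two_pi_mul_le hb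
  have hexp_pos := Real.exp_pos (-(2 * π * b))
  have hε : 4 * ‖l‖ * Real.exp (-(2 * π * b)) ≤ 1 / 2 := by nlinarith
  have hdist : ‖omegaFun l - (b - a * I)‖ ≤ 1 / 2 := by
    have hlI : b - a * I = -(I * l) := by
      simp only [l]; ring_nf; rw [I_sq]; ring
    rw [hlI, sub_neg_eq_add]
    refine (norm_omegaFun_add_I_mul_le (by rw [hl_im]; nlinarith)).trans ?_
    rwa [hl_im]
  calc |arg (omegaFun l)| ≤ (|-a| + 1 / 2) / (b - 1 / 2) := by
        simpa using abs_arg_le_of_norm_sub_le hdist (by simp; linarith)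
    _ = (2 * |a| + 1) / (2 * b - 1) := by rw [abs_neg]; field_simp
    _ ≤ (2 * |a| + 1) / b := div_le_div_of_nonneg_left (by positivity) (by linarith) (by linarith)

lemma abs_mul_arg_omegaFun_le {a b t c : ℝ} (hb : 1 ≤ b) (hab : |a| ≤ b) (ht : |t| ≤ c * b) :
    |t * arg (omegaFun (a + b * I))| ≤ c * (2 * |a| + 1) := by
  have hcb : 0 ≤ c * b := (abs_nonneg t).trans ht
  calc |t * arg (omegaFun (a + b * I))| ≤ c * b * ((2 * |a| + 1) / b) := by
        rw [abs_mul]; exact mul_le_mul ht (abs_arg_omegaFun_le hb hab) (abs_nonneg _) hcb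
    _ = c * (2 * |a| + 1) := by field_simp

theorem stmt13_general (ϑ σ : ℝ) :
    ∃ M₀ > (0 : ℝ), ∀ M ≥ M₀, ∃ C > (0 : ℝ), ∀ τ η : ℝ,
      ((0 < η ∧ 2 * M < τ) ∨ (-τ/2 < η ∧ η < 0 ∧ 2 * M < τ)) →
      (Real.exp (-τ * Complex.arg (omegaFun ((σ : ℂ) + (τ : ℂ) * Complex.I)) +
          (τ + η) * Complex.arg (omegaFun (((σ : ℂ) + (τ : ℂ) * Complex.I) +
            ((ϑ : ℂ) + (η : ℂ) * Complex.I)))) ≤ C) ∧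
      |η * Complex.arg (omegaFun (((σ : ℂ) + (τ : ℂ) * Complex.I) +
          ((ϑ : ℂ) + (η : ℂ) * Complex.I)))| ≤ C ∧
      |τ * (Complex.arg (omegaFun (((σ : ℂ) + (τ : ℂ) * Complex.I) +
            ((ϑ : ℂ) + (η : ℂ) * Complex.I))) -
          Complex.arg (omegaFun ((σ : ℂ) + (τ : ℂ) * Complex.I)))| ≤ C := by
  set K := 2 * (|σ| + |ϑ|) + 1 with hK
  refine ⟨1 + |σ| + |ϑ|, by positivity, fun M hM => ⟨Real.exp (5 * K), Real.exp_pos _,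
    fun τ η hreg => ?_⟩⟩
  have hσ₀ := abs_nonneg σ
  have hϑ₀ := abs_nonneg ϑ
  obtain ⟨hMτ, hτ, hη⟩ : 2 * M < τ ∧ τ ≤ 2 * (τ + η) ∧ |η| ≤ τ + η := by
    rcases hreg with ⟨h₁, h₂⟩ | ⟨h₁, h₂, h₃⟩
    · exact ⟨h₂, by linarith, by rw [abs_of_pos h₁]; linarith⟩
    · exact ⟨h₃, by linarith, by rw [abs_of_neg h₂]; linarith⟩
  have hshift : ((σ : ℂ) + τ * I) + (ϑ + η * I) = ((σ + ϑ : ℝ) : ℂ) + ((τ + η : ℝ) : ℂ) * I := by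
    push_cast; ring
  rw [hshift]
  have hσϑ := abs_add_le σ ϑ
  set A := arg (omegaFun (σ + τ * I))
  set B := arg (omegaFun ((σ + ϑ : ℝ) + (τ + η : ℝ) * I))
  have hA : |τ * A| ≤ 1 * (2 * |σ| + 1) :=
    abs_mul_arg_omegaFun_le (by linarith) (by linarith)
      (by rw [one_mul, abs_of_pos (by linarith)])
  have hB : ∀ t, |t| ≤ 2 * (τ + η) → |t * B| ≤ 2 * (2 * |σ + ϑ| + 1) := fun t ht =>
    abs_mul_arg_omegaFun_le (by linarith) (by linarith) ht
  have hτB := hB τ (by rwa [abs_of_pos (by linarith)])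
  have hηB := hB η (by linarith)
  have hexp : 5 * K + 1 ≤ Real.exp (5 * K) := Real.add_one_le_exp _
  obtain ⟨hA₁, hA₂⟩ := abs_le.mp hA
  obtain ⟨hτB₁, hτB₂⟩ := abs_le.mp hτB
  obtain ⟨hηB₁, hηB₂⟩ := abs_le.mp hηB
  refine ⟨Real.exp_le_exp.mpr (by linarith), ?_, ?_⟩
  · rw [abs_le]; constructor <;> linarith
  · rw [mul_sub, abs_le]; constructor <;> linarith

/-- for `ϑ ∈ (0,1)`, `σ ∈ (max{-1/2,-ϑ}, 3/2-ϑ)` and `ω(λ) = λ·cot(λπ)`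
there is `M₀ > 0` such that for all `M ≥ M₀` there is `C = C(M,σ,ϑ) > 0` with
`|exp(-τ·arg ω(s) + (τ+η)·arg ω(s+ζ))| ≤ C` whenever `s = σ+iτ`, `ζ = ϑ+iη` and
`(η,τ) ∈ Σ₂′ ∪ Σ₂″`, where `Σ₂′ = {η > 0, τ > 2M}` and `Σ₂″ = {-τ/2 < η < 0, τ > 2M}`.
In fact both `|η·arg ω(s+ζ)|` and `|τ·(arg ω(s+ζ) - arg ω(s))|` are bounded by
constants depending only on `M, σ, ϑ` there. -/
theorem stmt13 (ϑ σ : ℝ) (hϑ : ϑ ∈ Set.Ioo (0:ℝ) 1)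
    (hσ : σ ∈ Set.Ioo (max (-1/2) (-ϑ)) (3/2 - ϑ)) :
    ∃ M₀ > (0 : ℝ), ∀ M ≥ M₀, ∃ C > (0 : ℝ), ∀ τ η : ℝ,
      ((0 < η ∧ 2 * M < τ) ∨ (-τ/2 < η ∧ η < 0 ∧ 2 * M < τ)) →
      (Real.exp (-τ * Complex.arg (omegaFun ((σ : ℂ) + (τ : ℂ) * Complex.I)) +
          (τ + η) * Complex.arg (omegaFun (((σ : ℂ) + (τ : ℂ) * Complex.I) +
            ((ϑ : ℂ) + (η : ℂ) * Complex.I)))) ≤ C) ∧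
      |η * Complex.arg (omegaFun (((σ : ℂ) + (τ : ℂ) * Complex.I) +
          ((ϑ : ℂ) + (η : ℂ) * Complex.I)))| ≤ C ∧
      |τ * (Complex.arg (omegaFun (((σ : ℂ) + (τ : ℂ) * Complex.I) +
            ((ϑ : ℂ) + (η : ℂ) * Complex.I))) -
          Complex.arg (omegaFun ((σ : ℂ) + (τ : ℂ) * Complex.I)))| ≤ C :=
  stmt13_general ϑ σ
end
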